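/- For every n ≥ 1 one has the identity F_n(s,t) = F_{n−1}(s^p − p·t, t^p) in ℤ[s,t]. -/
import Mathlib


open MvPolynomial

/-- The polynomials `F_n ∈ ℤ[s,t]` (with `s = X 0`, `t = X 1`), defined recursively by
`F_0(s,t) = s` and `F_n(s,t) = F_{n-1}(s,t)^p - p · F_{n-1}(t,0)`. -/
noncomputable def F (p : ℕ) : ℕ → MvPolynomial (Fin 2) ℤ
  | 0 => X 0
  | n + 1 => F p n ^ p - (p : MvPolynomial (Fin 2) ℤ) * (aeval ![X 1, 0] (F p n))

lemma comm_key (p : ℕ) (hp0 : p ≠ 0) :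
    (aeval (R := ℤ) ![X 1, (0 : MvPolynomial (Fin 2) ℤ)]).comp
        (aeval ![X 0 ^ p - (p : MvPolynomial (Fin 2) ℤ) * X 1, X 1 ^ p])
      = (aeval ![X 0 ^ p - (p : MvPolynomial (Fin 2) ℤ) * X 1, X 1 ^ p]).comp
        (aeval ![X 1, (0 : MvPolynomial (Fin 2) ℤ)]) := by
  apply MvPolynomial.algHom_ext
  intro i
  fin_cases i <;> simp [hp0]

/-- For `n ≥ 1` one has `F_n(s,t) = F_{n-1}(s^p - p·t, t^p)` in `ℤ[s,t]`. -/
theorem F_eq_subst (p : ℕ) (hp : p.Prime) (n : ℕ) (hn : 1 ≤ n) :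
    F p n = aeval ![X 0 ^ p - (p : MvPolynomial (Fin 2) ℤ) * X 1, X 1 ^ p]
      (F p (n - 1)) := by
  induction n with
  | zero => omega
  | succ m ih =>
    cases m with
    | zero => simp [F]
    | succ k =>
      have ih' := ih (by omega)
      simp only [Nat.add_sub_cancel] at ih' ⊢
      have hcomm := congrArg (fun φ => φ (F p k)) (comm_key p hp.ne_zero)
      simp only [AlgHom.comp_apply] at hcomm
      show F p (k + 1) ^ p - (p : MvPolynomial (Fin 2) ℤ)
          * (aeval ![X 1, 0] (F p (k + 1)))
        = aeval ![X 0 ^ p - (p : MvPolynomial (Fin 2) ℤ) * X 1, X 1 ^ p]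
          (F p k ^ p - (p : MvPolynomial (Fin 2) ℤ) * (aeval ![X 1, 0] (F p k)))
      rw [map_sub, map_mul, map_pow, map_natCast]
      conv_lhs => rw [ih']
      rw [hcomm]
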